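/- arXiv:1205.3843 — 3 statements merged into one kernel-verified Lean document; each statement's English description precedes it below -/
import Mathlib

section
/- Let f : MvPolynomial (Fin n) ℂ be weighted homogeneous of weighted degree d with respect to weights w : Fin n → ℕ, assume w j > 0 for every j, and fix an index i : Fin n. In the localization S = Localization.Away (X i) of MvPolynomial (Fin n) ℂ at the i-th variable, the image of pderiv i f under the algebra map lies in the ideal of S generated by the images of f and of the partial derivatives pderiv j f for all j ≠ i. -/
open MvPolynomial

lemma X_mul_pderiv_monomial' {R : Type*} [CommSemiring R] {σ : Type*} [DecidableEq σ]
    (j : σ) (α : σ →₀ ℕ) (c : R) :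
    X j * pderiv j (monomial α c) = (α j) • monomial α c := by
  rw [pderiv_monomial, X, monomial_mul]
  rcases Nat.eq_zero_or_pos (α j) with h | h
  · simp [h]
  · have : Finsupp.single j 1 + (α - Finsupp.single j 1) = α := by
      ext k
      by_cases hk : k = j
      · subst hk; simp [Finsupp.single_apply]; omega
      · simp [Finsupp.single_apply, hk, Ne.symm hk]
    rw [this, smul_monomial]
    simp [nsmul_eq_mul, mul_comm]

lemma euler_identity {R : Type*} [CommSemiring R] {n : ℕ} (w : Fin n → ℕ) (d : ℕ)
    (f : MvPolynomial (Fin n) R) (hf : f.IsWeightedHomogeneous w d) :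
    ∑ j, (w j) • (X j * pderiv j f) = d • f := by
  conv_lhs => rw [f.as_sum]
  simp only [map_sum, Finset.mul_sum, Finset.smul_sum]
  rw [Finset.sum_comm]
  conv_rhs => rw [f.as_sum, Finset.smul_sum]
  refine Finset.sum_congr rfl fun α hα => ?_
  have hdeg : (Finsupp.weight w) α = d := hf (mem_support_iff.mp hα)
  classical
  have : ∀ j : Fin n, (w j) • (X j * pderiv j (monomial α (coeff α f)))
      = (w j * α j) • monomial α (coeff α f) := by
    intro j
    rw [X_mul_pderiv_monomial', smul_smul]
  simp only [this]
  rw [← Finset.sum_smul]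
  congr 1
  rw [← hdeg, Finsupp.weight_apply, Finsupp.sum]
  rw [Finset.sum_subset (Finset.subset_univ α.support)]
  · exact Finset.sum_congr rfl fun j _ => by rw [smul_eq_mul, mul_comm]
  · intro j _ hj
    simp [Finsupp.notMem_support_iff.mp hj]

/-- If `f` is weighted homogeneous of weighted degree `d` with respect to strictly positive
weights `w`, then in the localization of `MvPolynomial (Fin n) ℂ` away from the `i`-th
variable `X i`, the image of `∂f/∂x_i` lies in the ideal generated by the images of `f`
and of the partial derivatives `∂f/∂x_j` for all `j ≠ i`. -/
theorem pderiv_mem_span_localization_away (n : ℕ) (w : Fin n → ℕ) (d : ℕ)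
    (f : MvPolynomial (Fin n) ℂ) (hf : f.IsWeightedHomogeneous w d)
    (hw : ∀ j, 0 < w j) (i : Fin n) :
    algebraMap (MvPolynomial (Fin n) ℂ) (Localization.Away (X i : MvPolynomial (Fin n) ℂ))
        (pderiv i f) ∈
      Ideal.span
        (algebraMap (MvPolynomial (Fin n) ℂ) (Localization.Away (X i : MvPolynomial (Fin n) ℂ)) ''
          (insert f {g : MvPolynomial (Fin n) ℂ | ∃ j ≠ i, g = pderiv j f})) := by
  classical
  set S := Localization.Away (X i : MvPolynomial (Fin n) ℂ) with hS
  set φ := algebraMap (MvPolynomial (Fin n) ℂ) S with hφ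
  set I := Ideal.span (φ '' (insert f {g : MvPolynomial (Fin n) ℂ | ∃ j ≠ i, g = pderiv j f}))
    with hI
  have hfI : φ f ∈ I := Ideal.subset_span ⟨f, Set.mem_insert _ _, rfl⟩
  have hjI : ∀ j, j ≠ i → φ (pderiv j f) ∈ I := fun j hj =>
    Ideal.subset_span ⟨pderiv j f, Set.mem_insert_iff.mpr (Or.inr ⟨j, hj, rfl⟩), rfl⟩
  have heuler := congrArg φ (euler_identity w d f hf)
  simp only [map_sum, map_nsmul, map_mul, nsmul_eq_mul, map_natCast] at heuler
  -- heuler : ∑ j, ↑(w j) * (φ (X j) * φ (pderiv j f)) = ↑d * φ f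
  have hsplit := Finset.add_sum_erase Finset.univ
    (fun j => ((w j : S)) * (φ (X j) * φ (pderiv j f))) (Finset.mem_univ i)
  have hkeyeq : ((w i : S)) * (φ (X i) * φ (pderiv i f))
      = (d : S) * φ f - ∑ j ∈ Finset.univ.erase i, ((w j : S)) * (φ (X j) * φ (pderiv j f)) := by
    rw [← heuler, ← hsplit]; ring
  have key : ((w i : S)) * (φ (X i) * φ (pderiv i f)) ∈ I := by
    rw [hkeyeq]
    exact Ideal.sub_mem _ (Ideal.mul_mem_left _ _ hfI)
      (Ideal.sum_mem _ fun j hj =>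
        Ideal.mul_mem_left _ _ (Ideal.mul_mem_left _ _ (hjI j (Finset.ne_of_mem_erase hj))))
  have hwu : IsUnit ((w i : S)) := by
    have h1 : IsUnit ((w i : ℂ)) :=
      isUnit_iff_ne_zero.mpr (Nat.cast_ne_zero.mpr (hw i).ne')
    have h2 := (h1.map (algebraMap ℂ (MvPolynomial (Fin n) ℂ))).map φ
    simpa using h2
  have hXu : IsUnit (φ (X i)) := IsLocalization.Away.algebraMap_isUnit (X i)
  obtain ⟨u, hu⟩ := hwu.mul hXu
  have hm : (↑u : S) * φ (pderiv i f) ∈ I := by rw [hu, mul_assoc]; exact key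
  have := Ideal.mul_mem_left I (↑u⁻¹ : S) hm
  rwa [← mul_assoc, Units.inv_mul, one_mul] at this
end

section
/- Let f = (X 2)^2 − (X 0) * (X 1) in MvPolynomial (Fin 3) ℂ (the quadric cone z² − xy in ℂ³). Then for every index i : Fin 3, the partial derivative pderiv i f does NOT belong to the ideal of MvPolynomial (Fin 3) ℂ generated by f together with the partial derivatives pderiv j f for the two indices j ≠ i. -/
open MvPolynomial

private lemma aux_not_dvd {q : Polynomial ℂ} (hq : q.natDegree ≤ 1) (hq0 : q ≠ 0) :
    ¬ (Polynomial.X : Polynomial ℂ) ^ 2 ∣ q := by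
  intro h
  have h1 : ((Polynomial.X : Polynomial ℂ) ^ 2).natDegree ≤ q.natDegree :=
    Polynomial.natDegree_le_of_dvd h hq0
  simp [Polynomial.natDegree_X_pow] at h1
  omega


/-- For the quadric cone `f = z² − xy` in `ℂ³` (with `x = X 0`, `y = X 1`, `z = X 2`),
no partial derivative `∂f/∂x_i` lies in the ideal generated by `f` and the other two
partial derivatives.  Hence the divisor `{f = 0}` has no trivial Cartesian factor at the
origin: its triviality index at the origin is `0`. -/
theorem quadric_cone_pderiv_not_mem (i : Fin 3) :
    pderiv i ((X 2 : MvPolynomial (Fin 3) ℂ) ^ 2 - X 0 * X 1) ∉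
      Ideal.span
        (insert ((X 2 : MvPolynomial (Fin 3) ℂ) ^ 2 - X 0 * X 1)
          {g : MvPolynomial (Fin 3) ℂ |
            ∃ j ≠ i, g = pderiv j ((X 2 : MvPolynomial (Fin 3) ℂ) ^ 2 - X 0 * X 1)}) := by
  intro h
  -- choose the coordinate k surviving in pderiv i f
  set k : Fin 3 := if i = 0 then 1 else if i = 1 then 0 else 2 with hk
  set φ : MvPolynomial (Fin 3) ℂ →ₐ[ℂ] Polynomial ℂ :=
    aeval (fun j => if j = k then Polynomial.X else 0) with hφ
  have key : pderiv i ((X 2 : MvPolynomial (Fin 3) ℂ) ^ 2 - X 0 * X 1) ∈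
      Ideal.comap φ.toRingHom (Ideal.span {(Polynomial.X : Polynomial ℂ) ^ 2}) := by
    refine Ideal.span_le.mpr ?_ h
    rintro g (rfl | ⟨j, hji, rfl⟩)
    · fin_cases i <;>
        simp [Ideal.mem_comap, hφ, hk, Ideal.mem_span_singleton]
    · fin_cases i <;> fin_cases j <;>
        simp_all [Ideal.mem_comap, hφ, hk, pderiv_X, Ideal.mem_span_singleton]
  rw [Ideal.mem_comap, Ideal.mem_span_singleton] at key
  fin_cases i <;> simp [hφ, hk, pderiv_X] at key
  · exact aux_not_dvd (by simp) (by simp) key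
  · exact aux_not_dvd (by simp) (by simp) key
  · exact aux_not_dvd (by simp [Polynomial.natDegree_mul (two_ne_zero) Polynomial.X_ne_zero]) (by simp) key
end

section
/- Let S = MvPolynomial (Fin (n+1)) ℂ, write ℓ = Fin.last n for the last index, and let f ∈ S satisfy pderiv ℓ f = 0 (f does not involve the last variable). Let M be the S-submodule of Derivation ℂ S S consisting of those derivations θ with θ f ∈ Ideal.span {f}, let M₀ be the submodule of those θ ∈ M with θ (X ℓ) = 0, and let P be the cyclic S-submodule of Derivation ℂ S S generated by the coordinate derivation ∂_ℓ (the unique ℂ-derivation with ∂_ℓ (X j) = 1 if j = ℓ and 0 otherwise). Then P ⊆ M, M is the internal direct sum of M₀ and P: every θ ∈ M can be written uniquely as θ = θ₀ + g • ∂_ℓ with θ₀ ∈ M₀ and g ∈ S, namely g = θ (X ℓ). -/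
open MvPolynomial

noncomputable def logDer (n : ℕ) (f : MvPolynomial (Fin (n + 1)) ℂ) :
    Submodule (MvPolynomial (Fin (n + 1)) ℂ)
      (Derivation ℂ (MvPolynomial (Fin (n + 1)) ℂ) (MvPolynomial (Fin (n + 1)) ℂ)) where
  carrier := {θ | θ f ∈ Ideal.span {f}}
  add_mem' hθ hη := by
    simpa using add_mem hθ hη
  zero_mem' := by simp
  smul_mem' c θ hθ := by
    simpa using Ideal.mul_mem_left _ c hθ

noncomputable def logDer₀ (n : ℕ) (f : MvPolynomial (Fin (n + 1)) ℂ) :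
    Submodule (MvPolynomial (Fin (n + 1)) ℂ)
      (Derivation ℂ (MvPolynomial (Fin (n + 1)) ℂ) (MvPolynomial (Fin (n + 1)) ℂ)) where
  carrier := {θ | θ ∈ logDer n f ∧ θ (X (Fin.last n)) = 0}
  add_mem' hθ hη := by
    refine ⟨add_mem hθ.1 hη.1, ?_⟩
    simp [hθ.2, hη.2]
  zero_mem' := by simp [zero_mem]
  smul_mem' c θ hθ := by
    refine ⟨Submodule.smul_mem _ c hθ.1, ?_⟩
    simp [hθ.2]

/-- If `f` does not involve the last variable `X ℓ` (i.e. `∂_ℓ f = 0`), then the module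
`M = Der(−log f)` of logarithmic derivations is the internal direct sum of the submodule
`M₀` of logarithmic derivations killing `X ℓ` and the cyclic submodule `P` generated by
the coordinate derivation `∂_ℓ`: one has `P ⊆ M`, and every `θ ∈ M` is written uniquely
as `θ = θ₀ + g • ∂_ℓ` with `θ₀ ∈ M₀` and `g ∈ S`, namely `g = θ (X ℓ)`. -/
theorem logDer_direct_sum_of_product (n : ℕ) (f : MvPolynomial (Fin (n + 1)) ℂ)
    (hf : pderiv (Fin.last n) f = 0) :
    Submodule.span (MvPolynomial (Fin (n + 1)) ℂ)
        {mkDerivation ℂ (Pi.single (Fin.last n) (1 : MvPolynomial (Fin (n + 1)) ℂ))} ≤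
      logDer n f ∧
    (∀ θ ∈ logDer n f,
      (∃! p : Derivation ℂ (MvPolynomial (Fin (n + 1)) ℂ) (MvPolynomial (Fin (n + 1)) ℂ) ×
          MvPolynomial (Fin (n + 1)) ℂ,
        p.1 ∈ logDer₀ n f ∧
          θ = p.1 + p.2 • mkDerivation ℂ (Pi.single (Fin.last n) (1 : MvPolynomial (Fin (n + 1)) ℂ))) ∧
      (∀ (θ₀ : Derivation ℂ (MvPolynomial (Fin (n + 1)) ℂ) (MvPolynomial (Fin (n + 1)) ℂ))
          (g : MvPolynomial (Fin (n + 1)) ℂ), θ₀ ∈ logDer₀ n f →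
        θ = θ₀ + g • mkDerivation ℂ (Pi.single (Fin.last n) (1 : MvPolynomial (Fin (n + 1)) ℂ)) →
        g = θ (X (Fin.last n)))) := by
  set ℓ := Fin.last n
  set d := mkDerivation ℂ (Pi.single ℓ (1 : MvPolynomial (Fin (n + 1)) ℂ)) with hd
  have hdf : d f = 0 := by
    show mkDerivation ℂ (Pi.single ℓ 1) f = 0
    rw [← pderiv_def]; exact hf
  have hdX : d (X ℓ) = 1 := by rw [mkDerivation_X]; simp
  constructor
  · rw [Submodule.span_singleton_le_iff_mem]
    show d f ∈ Ideal.span {f}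
    rw [hdf]; exact zero_mem _
  · intro θ hθ
    have key : ∀ (θ₀ : Derivation ℂ (MvPolynomial (Fin (n + 1)) ℂ) (MvPolynomial (Fin (n + 1)) ℂ))
        (g : MvPolynomial (Fin (n + 1)) ℂ), θ₀ ∈ logDer₀ n f →
        θ = θ₀ + g • d → g = θ (X ℓ) := by
      intro θ₀ g h₀ heq
      have := congrArg (fun η : Derivation ℂ (MvPolynomial (Fin (n + 1)) ℂ)
        (MvPolynomial (Fin (n + 1)) ℂ) => η (X ℓ)) heq
      simp only [Derivation.add_apply, Derivation.smul_apply, h₀.2, hdX, zero_add,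
        smul_eq_mul, mul_one] at this
      have h0 : θ₀ (X ℓ) = 0 := h₀.2; rw [h0, zero_add] at this; exact this.symm
    refine ⟨⟨⟨θ - θ (X ℓ) • d, θ (X ℓ)⟩, ⟨⟨?_, ?_⟩, by simp⟩, ?_⟩, key⟩
    · show (θ - θ (X ℓ) • d) f ∈ Ideal.span {f}
      simp only [Derivation.sub_apply, Derivation.smul_apply, hdf, smul_zero, sub_zero]
      exact hθ
    · change (θ - θ (X ℓ) • d) (X ℓ) = 0; simp [hdX]
    · rintro ⟨θ₀, g⟩ ⟨h₀, heq⟩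
      have hg : g = θ (X ℓ) := key θ₀ g h₀ heq
      subst hg
      have hθ₀ : θ₀ = θ - θ (X ℓ) • d := eq_sub_iff_add_eq.mpr heq.symm
      exact Prod.ext hθ₀ rfl
end
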